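/- arXiv:2304.14257 — 2 statements merged into one kernel-verified Lean document; each statement's English description precedes it below -/
import Mathlib

section
/- Under the assumptions of the elliptic wellposedness lemma, the solution operator S_o is Lipschitz in its second argument: there exists a constant C_o* (depending on Ω, κ, ‖w₀‖_{H²}) such that for all w₁, w₂ ∈ B_r(w₀) and v ∈ H⁻¹(Ω), ‖S_o(v, w₁) − S_o(v, w₂)‖_{H¹(Ω)} ≤ C_o* ‖v‖_{H⁻¹(Ω)} ‖w₁ − w₂‖_{H²(Ω)}. -/
/-!
Testing the difference of the weak formulations for `w₁` and `w₂` with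
`e = S(v, w₁) - S(v, w₂)` gives `∫ w₁³ |∇e|² = ∫ (w₂³ - w₁³) ∇S(v, w₂) · ∇e`. On the ball
`B_r(w₀)` the embedding `H² ⊂ L^∞` keeps `w` between `κ / 2` and `CE ‖w₀‖ + κ / 2`, so
`|w₂³ - w₁³| ≤ c ‖w₁ - w₂‖ w₁³`. Young's inequality then absorbs half of the weighted energy of
`e`, which is left bounded by `c² ‖w₁ - w₂‖²` times the weighted energy of `S(v, w₂)`; the latter
is at most a multiple of `‖v‖²` by coercivity and the Poincaré inequality.
-/

open MeasureTheory RealInnerProductSpace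

lemma mul_inner_le_of_abs_le_mul {F : Type*} [NormedAddCommGroup F] [InnerProductSpace ℝ F]
    {a b c : ℝ} (p q : F) (ha : 0 ≤ a) (hb : |b| ≤ c * a) :
    b * ⟪p, q⟫ ≤ (c ^ 2 * (a * ⟪p, p⟫) + a * ⟪q, q⟫) / 2 := by
  rw [real_inner_self_eq_norm_sq, real_inner_self_eq_norm_sq]
  have hyoung : 2 * c * (‖p‖ * ‖q‖) ≤ c ^ 2 * ‖p‖ ^ 2 + ‖q‖ ^ 2 := by
    nlinarith [sq_nonneg (c * ‖p‖ - ‖q‖)]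
  calc b * ⟪p, q⟫ ≤ |b| * (‖p‖ * ‖q‖) := by
        refine (le_abs_self _).trans ?_
        rw [abs_mul]
        exact mul_le_mul_of_nonneg_left (abs_real_inner_le_norm p q) (abs_nonneg b)
    _ ≤ c * a * (‖p‖ * ‖q‖) := by gcongr
    _ ≤ (c ^ 2 * (a * ‖p‖ ^ 2) + a * ‖q‖ ^ 2) / 2 := by
        linear_combination mul_le_mul_of_nonneg_left hyoung ha / 2

lemma abs_pow_three_sub_le_mul_of_mem_Icc {l M a b d : ℝ} (hl : 0 < l)
    (ha : a ∈ Set.Icc l M) (hb : b ∈ Set.Icc l M) (hd : |b - a| ≤ d) :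
    |b ^ 3 - a ^ 3| ≤ 3 * M ^ 2 / l ^ 3 * d * a ^ 3 := by
  have hmax : max |b| |a| ≤ M := by
    rw [abs_of_pos (hl.trans_le hb.1), abs_of_pos (hl.trans_le ha.1)]
    exact max_le hb.2 ha.2
  have hl3 : l ^ 3 ≤ a ^ 3 := pow_le_pow_left₀ hl.le ha.1 3
  have hd0 : 0 ≤ d := (abs_nonneg _).trans hd
  calc |b ^ 3 - a ^ 3| ≤ |b - a| * 3 * max |b| |a| ^ 2 := abs_pow_sub_pow_le b a 3
    _ ≤ d * 3 * M ^ 2 := by gcongr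
    _ = 3 * M ^ 2 / l ^ 3 * d * l ^ 3 := by field_simp
    _ ≤ 3 * M ^ 2 / l ^ 3 * d * a ^ 3 := by gcongr

lemma pow_three_le_mul_of_mem_Icc {l M a b : ℝ} (hl : 0 < l) (ha : a ∈ Set.Icc l M)
    (hb : b ∈ Set.Icc l M) : a ^ 3 ≤ (M / l) ^ 3 * b ^ 3 := calc
  a ^ 3 ≤ M ^ 3 := pow_le_pow_left₀ (hl.le.trans ha.1) ha.2 3
  _ = (M / l) ^ 3 * l ^ 3 := by field_simp
  _ ≤ (M / l) ^ 3 * b ^ 3 := by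
      have hM : 0 ≤ M := hl.le.trans (ha.1.trans ha.2)
      gcongr
      exact hb.1

section WeightedForm

variable {Ω : Type*} [MeasurableSpace Ω] (μ : Measure Ω)
  {F : Type*} [NormedAddCommGroup F] [InnerProductSpace ℝ F]
  {X : Type*} [NormedAddCommGroup X] [NormedSpace ℝ X] (D : X →ₗ[ℝ] Ω → F)

noncomputable def weightedForm (a : Ω → ℝ) (u φ : X) : ℝ := ∫ x, a x * ⟪D u x, D φ x⟫ ∂μ

variable {μ D}

lemma weightedForm_sub_left {a : Ω → ℝ}
    (ha : ∀ u u' : X, Integrable (fun x => a x * ⟪D u x, D u' x⟫) μ) (u u' φ : X) :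
    weightedForm μ D a (u - u') φ = weightedForm μ D a u φ - weightedForm μ D a u' φ := by
  simp only [weightedForm, map_sub, Pi.sub_apply, inner_sub_left, mul_sub]
  exact integral_sub (ha u φ) (ha u' φ)

lemma mul_integral_norm_sq_le_weightedForm {a : Ω → ℝ} {m : ℝ} (hm : 0 ≤ m)
    (ham : ∀ x, m ≤ a x) {u : X} (hint : Integrable (fun x => a x * ⟪D u x, D u x⟫) μ) :
    m * ∫ x, ‖D u x‖ ^ 2 ∂μ ≤ weightedForm μ D a u u := by
  rw [← integral_const_mul]
  refine integral_mono_of_nonneg (ae_of_all _ fun x => by positivity) hint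
    (ae_of_all _ fun x => ?_)
  dsimp only
  rw [real_inner_self_eq_norm_sq]
  exact mul_le_mul_of_nonneg_right (ham x) (sq_nonneg _)

lemma sq_norm_le_weightedForm (Tfun : X →ₗ[ℝ] Ω → ℝ)
    (hnorm : ∀ u : X, ‖u‖ ^ 2 = ∫ x, (Tfun u x) ^ 2 ∂μ + ∫ x, ‖D u x‖ ^ 2 ∂μ) {CP : ℝ}
    (hPoin : ∀ u : X, ∫ x, (Tfun u x) ^ 2 ∂μ ≤ CP ^ 2 * ∫ x, ‖D u x‖ ^ 2 ∂μ)
    {a : Ω → ℝ} {m : ℝ} (hm : 0 < m) (ham : ∀ x, m ≤ a x) {u : X}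
    (hint : Integrable (fun x => a x * ⟪D u x, D u x⟫) μ) :
    ‖u‖ ^ 2 ≤ (1 + CP ^ 2) / m * weightedForm μ D a u u := by
  have hcoer := mul_integral_norm_sq_le_weightedForm hm.le ham hint
  rw [div_mul_eq_mul_div, le_div_iff₀ hm]
  nlinarith [hnorm u, hPoin u]

lemma weightedForm_self_le_mul {a b : Ω → ℝ} {K : ℝ} (hab : ∀ x, a x ≤ K * b x) {u : X}
    (ha : Integrable (fun x => a x * ⟪D u x, D u x⟫) μ)
    (hb : Integrable (fun x => b x * ⟪D u x, D u x⟫) μ) :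
    weightedForm μ D a u u ≤ K * weightedForm μ D b u u := by
  rw [weightedForm, weightedForm, ← integral_const_mul]
  refine integral_mono ha (hb.const_mul K) fun x => ?_
  rw [← mul_assoc]
  exact mul_le_mul_of_nonneg_right (hab x) real_inner_self_nonneg

lemma norm_le_mul_of_weightedForm_eq {a : Ω → ℝ} {K : ℝ} (hK : 0 ≤ K)
    (hcoer : ∀ u : X, ‖u‖ ^ 2 ≤ K * weightedForm μ D a u u) {v : X →L[ℝ] ℝ} {u : X}
    (hu : ∀ φ, weightedForm μ D a u φ = -v φ) : ‖u‖ ≤ K * ‖v‖ := by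
  have h : ‖u‖ ^ 2 ≤ K * ‖v‖ * ‖u‖ := calc
    ‖u‖ ^ 2 ≤ K * -v u := hu u ▸ hcoer u
    _ ≤ K * (‖v‖ * ‖u‖) := by gcongr; exact (neg_le_abs _).trans (v.le_opNorm u)
    _ = K * ‖v‖ * ‖u‖ := by ring
  rcases (norm_nonneg u).eq_or_lt with hu0 | hu0
  · rw [← hu0]; positivity
  · nlinarith

lemma weightedForm_sub_le_of_abs_sub_le {a₁ a₂ : Ω → ℝ} {c : ℝ} (ha₁ : ∀ x, 0 ≤ a₁ x)
    (hc : ∀ x, |a₂ x - a₁ x| ≤ c * a₁ x)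
    (hint₁ : ∀ u u' : X, Integrable (fun x => a₁ x * ⟪D u x, D u' x⟫) μ)
    (hint₂ : ∀ u u' : X, Integrable (fun x => a₂ x * ⟪D u x, D u' x⟫) μ)
    {ℓ : X → ℝ} {u₁ u₂ : X} (h₁ : ∀ φ, weightedForm μ D a₁ u₁ φ = ℓ φ)
    (h₂ : ∀ φ, weightedForm μ D a₂ u₂ φ = ℓ φ) :
    weightedForm μ D a₁ (u₁ - u₂) (u₁ - u₂) ≤ c ^ 2 * weightedForm μ D a₁ u₂ u₂ := by
  set e := u₁ - u₂
  have hdiff : weightedForm μ D a₁ e e = ∫ x, (a₂ x - a₁ x) * ⟪D u₂ x, D e x⟫ ∂μ := by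
    rw [weightedForm_sub_left hint₁, h₁, ← h₂]
    simp only [weightedForm, sub_mul]
    exact (integral_sub (hint₂ u₂ e) (hint₁ u₂ e)).symm
  have hyoung : ∫ x, (a₂ x - a₁ x) * ⟪D u₂ x, D e x⟫ ∂μ ≤
      (c ^ 2 * weightedForm μ D a₁ u₂ u₂ + weightedForm μ D a₁ e e) / 2 := by
    simp only [weightedForm]
    rw [← integral_const_mul, ← integral_add, ← integral_div]
    · refine integral_mono ?_ ?_ fun x => mul_inner_le_of_abs_le_mul _ _ (ha₁ x) (hc x)
      · exact ((hint₂ u₂ e).sub (hint₁ u₂ e)).congr (ae_of_all _ fun x => (sub_mul _ _ _).symm)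
      · exact (((hint₁ u₂ u₂).const_mul _).add (hint₁ e e)).div_const _
    · exact (hint₁ u₂ u₂).const_mul _
    · exact hint₁ e e
  linarith

lemma sq_norm_sub_le_of_weightedForm_eq {a₁ a₂ : Ω → ℝ} {K K' c : ℝ} (hK : 0 ≤ K)
    (hK' : 0 ≤ K') (ha₁ : ∀ x, 0 ≤ a₁ x) (hc : ∀ x, |a₂ x - a₁ x| ≤ c * a₁ x)
    (ha₁₂ : ∀ x, a₁ x ≤ K' * a₂ x)
    (hint₁ : ∀ u u' : X, Integrable (fun x => a₁ x * ⟪D u x, D u' x⟫) μ)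
    (hint₂ : ∀ u u' : X, Integrable (fun x => a₂ x * ⟪D u x, D u' x⟫) μ)
    (hcoer₁ : ∀ u : X, ‖u‖ ^ 2 ≤ K * weightedForm μ D a₁ u u)
    (hcoer₂ : ∀ u : X, ‖u‖ ^ 2 ≤ K * weightedForm μ D a₂ u u) {v : X →L[ℝ] ℝ} {u₁ u₂ : X}
    (h₁ : ∀ φ, weightedForm μ D a₁ u₁ φ = -v φ) (h₂ : ∀ φ, weightedForm μ D a₂ u₂ φ = -v φ) :
    ‖u₁ - u₂‖ ^ 2 ≤ K' * (K * c * ‖v‖) ^ 2 := calc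
  ‖u₁ - u₂‖ ^ 2 ≤ K * (c ^ 2 * weightedForm μ D a₁ u₂ u₂) :=
    (hcoer₁ _).trans (by gcongr; exact weightedForm_sub_le_of_abs_sub_le ha₁ hc hint₁ hint₂ h₁ h₂)
  _ ≤ K * (c ^ 2 * (K' * -v u₂)) := by
    gcongr
    exact h₂ u₂ ▸ weightedForm_self_le_mul ha₁₂ (hint₁ u₂ u₂) (hint₂ u₂ u₂)
  _ ≤ K * (c ^ 2 * (K' * (‖v‖ * (K * ‖v‖)))) := by
    gcongr
    exact (neg_le_abs _).trans ((v.le_opNorm _).trans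
      (by gcongr; exact norm_le_mul_of_weightedForm_eq hK hcoer₂ h₂))
  _ = K' * (K * c * ‖v‖) ^ 2 := by ring

end WeightedForm

section Ball

variable {Ω H2 : Type*} [NormedAddCommGroup H2] [NormedSpace ℝ H2] {R : H2 →ₗ[ℝ] Ω → ℝ}
  {CE : ℝ}

lemma abs_sub_le_of_abs_le_mul_norm (hEmb : ∀ f : H2, ∀ x : Ω, |R f x| ≤ CE * ‖f‖)
    (f g : H2) (x : Ω) : |R f x - R g x| ≤ CE * ‖f - g‖ := by
  simpa using hEmb (f - g) x

lemma mem_Icc_of_norm_sub_le (hEmb : ∀ f : H2, ∀ x : Ω, |R f x| ≤ CE * ‖f‖) (hCE : 0 < CE)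
    {w₀ : H2} {κ : ℝ} (hκinf : ∀ x : Ω, κ ≤ R w₀ x) {r : ℝ} (hr : r < κ / (2 * CE)) {w : H2}
    (hw : ‖w - w₀‖ ≤ r) (x : Ω) : R w x ∈ Set.Icc (κ / 2) (CE * ‖w₀‖ + κ / 2) := by
  have hCEr : CE * r ≤ κ / 2 := by
    rw [lt_div_iff₀ (by positivity)] at hr
    linarith
  have hclose : |R w x - R w₀ x| ≤ κ / 2 :=
    (abs_sub_le_of_abs_le_mul_norm hEmb w w₀ x).trans
      ((mul_le_mul_of_nonneg_left hw hCE.le).trans hCEr)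
  have hw₀ := (abs_le.mp (hEmb w₀ x)).2
  constructor <;> linarith [(abs_le.mp hclose).1, (abs_le.mp hclose).2, hκinf x]

end Ball

theorem stmt5_general {Ω : Type*} [MeasurableSpace Ω] (μ : Measure Ω)
    {F : Type*} [NormedAddCommGroup F] [InnerProductSpace ℝ F]
    {X : Type*} [NormedAddCommGroup X] [InnerProductSpace ℝ X]
    {H2 : Type*} [NormedAddCommGroup H2] [NormedSpace ℝ H2]
    (Tfun : X →ₗ[ℝ] Ω → ℝ) (D : X →ₗ[ℝ] Ω → F)
    (hnorm : ∀ u : X, ‖u‖ ^ 2 = ∫ x, (Tfun u x) ^ 2 ∂μ + ∫ x, ‖D u x‖ ^ 2 ∂μ)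
    (CP : ℝ)
    (hPoin : ∀ u : X, ∫ x, (Tfun u x) ^ 2 ∂μ ≤ CP ^ 2 * ∫ x, ‖D u x‖ ^ 2 ∂μ)
    (R : H2 →ₗ[ℝ] Ω → ℝ) (CE : ℝ) (hCE : 0 < CE)
    (hEmb : ∀ f : H2, ∀ x : Ω, |R f x| ≤ CE * ‖f‖)
    (w₀ : H2) (κ : ℝ) (hκ : 0 < κ) (hκinf : ∀ x : Ω, κ ≤ R w₀ x)
    (r : ℝ) (hr : r < κ / (2 * CE))
    (hInt : ∀ (w : H2) (u u' : X),
      Integrable (fun x => (R w x) ^ 3 * ⟪D u x, D u' x⟫) μ)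
    (S : (X →L[ℝ] ℝ) → H2 → X)
    (hS : ∀ (v : X →L[ℝ] ℝ) (w : H2), ‖w - w₀‖ ≤ r → ∀ φ : X,
      ∫ x, (R w x) ^ 3 * ⟪D (S v w) x, D φ x⟫ ∂μ = - v φ) :
    ∃ C_o' > 0, ∀ (v : X →L[ℝ] ℝ) (w₁ w₂ : H2),
      ‖w₁ - w₀‖ ≤ r → ‖w₂ - w₀‖ ≤ r →
      ‖S v w₁ - S v w₂‖ ≤ C_o' * ‖v‖ * ‖w₁ - w₂‖ := by
  set l := κ / 2
  set M := CE * ‖w₀‖ + l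
  have hl : 0 < l := by positivity
  have hIcc : ∀ w, ‖w - w₀‖ ≤ r → ∀ x, R w x ∈ Set.Icc l M := fun w hw =>
    mem_Icc_of_norm_sub_le hEmb hCE hκinf hr hw
  set K := (1 + CP ^ 2) / l ^ 3
  have hcoer : ∀ w, ‖w - w₀‖ ≤ r → ∀ u,
      ‖u‖ ^ 2 ≤ K * weightedForm μ D (fun x => R w x ^ 3) u u := fun w hw u =>
    sq_norm_le_weightedForm Tfun hnorm hPoin (by positivity)
      (fun x => pow_le_pow_left₀ hl.le (hIcc w hw x).1 3) (hInt w u u)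
  set c := 3 * M ^ 2 / l ^ 3
  refine ⟨K * c * CE * √((M / l) ^ 3), by positivity, fun v w₁ w₂ hw₁ hw₂ => ?_⟩
  have hsq := sq_norm_sub_le_of_weightedForm_eq (by positivity) (by positivity)
    (fun x => pow_nonneg (hl.le.trans (hIcc w₁ hw₁ x).1) 3)
    (fun x => abs_pow_three_sub_le_mul_of_mem_Icc hl (hIcc w₁ hw₁ x) (hIcc w₂ hw₂ x)
      (norm_sub_rev w₁ w₂ ▸ abs_sub_le_of_abs_le_mul_norm hEmb w₂ w₁ x))
    (fun x => pow_three_le_mul_of_mem_Icc hl (hIcc w₁ hw₁ x) (hIcc w₂ hw₂ x))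
    (hInt w₁) (hInt w₂) (hcoer w₁ hw₁) (hcoer w₂ hw₂) (hS v w₁ hw₁) (hS v w₂ hw₂)
  calc ‖S v w₁ - S v w₂‖ ≤ √((M / l) ^ 3 * (K * (c * (CE * ‖w₁ - w₂‖)) * ‖v‖) ^ 2) :=
        Real.le_sqrt_of_sq_le hsq
    _ = K * c * CE * √((M / l) ^ 3) * ‖v‖ * ‖w₁ - w₂‖ := by
        rw [Real.sqrt_mul (by positivity), Real.sqrt_sq (by positivity)]
        ring

/-- Lipschitz continuity of the elliptic solution operator `S_o(v, w)` in its second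
argument: under the assumptions of the elliptic wellposedness lemma there exists a
constant `C_o*` (depending on `Ω`, `κ`, `‖w₀‖_{H²}`) such that for all
`w₁, w₂ ∈ B_r(w₀) ⊂ H²(Ω)` and `v ∈ H⁻¹(Ω)`,
`‖S_o(v,w₁) − S_o(v,w₂)‖_{H¹} ≤ C_o* ‖v‖_{H⁻¹} ‖w₁ − w₂‖_{H²}`.
`X` models `H¹₀(Ω)` with gradient `D`; `H2` models `H²(Ω)` with realization `R` and
`L^∞` embedding constant `CE`; `κ = inf w₀ > 0` and `r ∈ (0, κ/(2CE))`. -/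
theorem stmt5 {Ω : Type*} [MeasurableSpace Ω] (μ : Measure Ω)
    {F : Type*} [NormedAddCommGroup F] [InnerProductSpace ℝ F]
    {X : Type*} [NormedAddCommGroup X] [InnerProductSpace ℝ X] [CompleteSpace X]
    {H2 : Type*} [NormedAddCommGroup H2] [NormedSpace ℝ H2]
    (Tfun : X →ₗ[ℝ] Ω → ℝ) (D : X →ₗ[ℝ] Ω → F)
    (hnorm : ∀ u : X, ‖u‖ ^ 2 = ∫ x, (Tfun u x) ^ 2 ∂μ + ∫ x, ‖D u x‖ ^ 2 ∂μ)
    (CP : ℝ) (hCP : 0 < CP)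
    (hPoin : ∀ u : X, ∫ x, (Tfun u x) ^ 2 ∂μ ≤ CP ^ 2 * ∫ x, ‖D u x‖ ^ 2 ∂μ)
    (R : H2 →ₗ[ℝ] Ω → ℝ) (CE : ℝ) (hCE : 0 < CE)
    (hEmb : ∀ f : H2, ∀ x : Ω, |R f x| ≤ CE * ‖f‖)
    (w₀ : H2) (κ : ℝ) (hκ : 0 < κ) (hκinf : ∀ x : Ω, κ ≤ R w₀ x)
    (r : ℝ) (hr0 : 0 < r) (hr : r < κ / (2 * CE))
    (hInt : ∀ (w : H2) (u u' : X),
      Integrable (fun x => (R w x) ^ 3 * ⟪D u x, D u' x⟫) μ)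
    (S : (X →L[ℝ] ℝ) → H2 → X)
    (hS : ∀ (v : X →L[ℝ] ℝ) (w : H2), ‖w - w₀‖ ≤ r → ∀ φ : X,
      ∫ x, (R w x) ^ 3 * ⟪D (S v w) x, D φ x⟫ ∂μ = - v φ) :
    ∃ C_o' > 0, ∀ (v : X →L[ℝ] ℝ) (w₁ w₂ : H2),
      ‖w₁ - w₀‖ ≤ r → ‖w₂ - w₀‖ ≤ r →
      ‖S v w₁ - S v w₂‖ ≤ C_o' * ‖v‖ * ‖w₁ - w₂‖ :=
  stmt5_general μ Tfun D hnorm CP hPoin R CE hCE hEmb w₀ κ hκ hκinf r hr hInt S hS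
end

section
/- The Fréchet derivative of the Nemytskii map G(w̃) = −β_F/(w̃+θ₂)² + β_p(θ₁−1) at w̃ ∈ B_r(w̃₀, T) acting on q is G′(w̃)q = 2β_F q/(w̃+θ₂)³, and it satisfies the uniform bound sup_{t∈[0,T]} ‖[G′(w̃)q](t)‖_{H²(Ω)} ≤ L_G sup_{t∈[0,T]} ‖q(t)‖_{H²(Ω)}. -/
open ContinuousLinearMap

section RingInverse

variable {𝕜 R : Type*} [NontriviallyNormedField 𝕜] [NormedCommRing R] [NormedAlgebra 𝕜 R]
  [HasSummableGeomSeries R]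

theorem hasFDerivAt_ringInverse_of_comm (x : Rˣ) :
    HasFDerivAt Ring.inverse (-mul 𝕜 R ((↑x⁻¹ : R) ^ 2)) x := by
  convert hasFDerivAt_ringInverse (𝕜 := 𝕜) x using 2
  ext z
  simp only [mul_apply', mulLeftRight_apply]
  ring

theorem hasFDerivAt_ringInverse_pow (x : Rˣ) (n : ℕ) :
    HasFDerivAt (fun u : R => Ring.inverse u ^ n)
      (-((n : 𝕜) • mul 𝕜 R ((↑x⁻¹ : R) ^ (n + 1)))) x := by
  refine ((hasFDerivAt_ringInverse_of_comm (𝕜 := 𝕜) x).pow n).congr_fderiv ?_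
  ext z
  rcases n with _ | n
  · simp
  · simp only [Ring.inverse_unit, smul_apply, neg_apply, mul_apply', Nat.add_sub_cancel,
      smul_neg, Nat.cast_smul_eq_nsmul]
    rw [nsmul_eq_mul, nsmul_eq_mul]
    ring

theorem hasFDerivAt_ringInverse_add_const_pow {x : R} {c : R} (hx : IsUnit (x + c)) (n : ℕ) :
    HasFDerivAt (fun u : R => Ring.inverse (u + c) ^ n)
      (-((n : 𝕜) • mul 𝕜 R (Ring.inverse (x + c) ^ (n + 1)))) x := by
  obtain ⟨y, hy⟩ := hx
  have := hasFDerivAt_ringInverse_pow (𝕜 := 𝕜) y n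
  rw [hy] at this
  rw [← hy, Ring.inverse_unit]
  exact (hasFDerivAt_comp_add_right c).2 this

end RingInverse

theorem norm_pow_mul_le_of_norm_le {R : Type*} [SeminormedRing R] {i : R} {C : ℝ}
    (hi : ‖i‖ ≤ C) {n : ℕ} (hn : 0 < n) (q : R) : ‖i ^ n * q‖ ≤ C ^ n * ‖q‖ :=
  calc ‖i ^ n * q‖ ≤ ‖i ^ n‖ * ‖q‖ := norm_mul_le _ _
    _ ≤ ‖i‖ ^ n * ‖q‖ := by gcongr; exact norm_pow_le' i hn
    _ ≤ C ^ n * ‖q‖ := by gcongr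

theorem stmt9_general {H : Type*} [NormedCommRing H] [NormedAlgebra ℝ H] [CompleteSpace H]
    (β_F θ₂ C₁ r T : ℝ) (hβF : 0 < β_F)
    (wt₀ : H)
    (hC₁ : ∀ u : H, ‖u - wt₀‖ ≤ r → IsUnit (u + algebraMap ℝ H θ₂) ∧
      ‖Ring.inverse (u + algebraMap ℝ H θ₂)‖ ≤ C₁)
    (wt : ℝ → H) (hball : ∀ t ∈ Set.Icc (0:ℝ) T, ‖wt t - wt₀‖ ≤ r)
    (β_p θ₁ : ℝ) :
    ∀ t ∈ Set.Icc (0:ℝ) T,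
      HasFDerivAt
        (fun u : H => -(β_F • (Ring.inverse (u + algebraMap ℝ H θ₂)) ^ 2)
          + algebraMap ℝ H (β_p * (θ₁ - 1)))
        ((2 * β_F) •
          (ContinuousLinearMap.mul ℝ H
            ((Ring.inverse (wt t + algebraMap ℝ H θ₂)) ^ 3))) (wt t) ∧
      ∀ q : H, ‖(2 * β_F) • ((Ring.inverse (wt t + algebraMap ℝ H θ₂)) ^ 3 * q)‖
        ≤ β_F * (2 * C₁ ^ 3) * ‖q‖ := by
  intro t ht
  obtain ⟨hunit, hinv⟩ := hC₁ (wt t) (hball t ht)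
  refine ⟨?_, fun q => ?_⟩
  · have hsq := hasFDerivAt_ringInverse_add_const_pow (𝕜 := ℝ) hunit 2
    refine ((hsq.fun_const_smul β_F).fun_neg.add_const _).congr_fderiv ?_
    rw [smul_neg, neg_neg, smul_smul, mul_comm]
    norm_num
  · calc ‖(2 * β_F) • ((Ring.inverse (wt t + algebraMap ℝ H θ₂)) ^ 3 * q)‖
        = 2 * β_F * ‖(Ring.inverse (wt t + algebraMap ℝ H θ₂)) ^ 3 * q‖ := by
          rw [norm_smul, Real.norm_of_nonneg (by positivity)]
      _ ≤ 2 * β_F * (C₁ ^ 3 * ‖q‖) := by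
          gcongr; exact norm_pow_mul_le_of_norm_le hinv (by norm_num) q
      _ = β_F * (2 * C₁ ^ 3) * ‖q‖ := by ring

/-- The Fréchet derivative of the Nemytskii map `G(w̃) = −β_F/(w̃+θ₂)² + β_p(θ₁−1)` at
`w̃ ∈ B_r(w̃₀, T)` acting on `q` is `G′(w̃)q = 2β_F q/(w̃+θ₂)³`, and it satisfies the
uniform bound `sup_{t∈[0,T]} ‖[G′(w̃)q](t)‖_{H²} ≤ L_G sup_{t∈[0,T]} ‖q(t)‖_{H²}` with
`L_G = β_F C₂ = 2β_F C₁³`.  `H` models the algebra `H²(Ω)`; `C₁` uniformly bounds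
`‖(w̃+θ₂)⁻¹‖_{H²}` on the ball. -/
theorem stmt9 {H : Type*} [NormedCommRing H] [NormedAlgebra ℝ H] [CompleteSpace H]
    (β_F θ₂ C₁ r T : ℝ) (hβF : 0 < β_F) (hθ₂ : 0 < θ₂) (hT : 0 < T) (hr : 0 < r)
    (wt₀ : H)
    (hC₁ : ∀ u : H, ‖u - wt₀‖ ≤ r → IsUnit (u + algebraMap ℝ H θ₂) ∧
      ‖Ring.inverse (u + algebraMap ℝ H θ₂)‖ ≤ C₁)
    (wt : ℝ → H) (hball : ∀ t ∈ Set.Icc (0:ℝ) T, ‖wt t - wt₀‖ ≤ r)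
    (β_p θ₁ : ℝ) :
    ∀ t ∈ Set.Icc (0:ℝ) T,
      HasFDerivAt
        (fun u : H => -(β_F • (Ring.inverse (u + algebraMap ℝ H θ₂)) ^ 2)
          + algebraMap ℝ H (β_p * (θ₁ - 1)))
        ((2 * β_F) •
          (ContinuousLinearMap.mul ℝ H
            ((Ring.inverse (wt t + algebraMap ℝ H θ₂)) ^ 3))) (wt t) ∧
      ∀ q : H, ‖(2 * β_F) • ((Ring.inverse (wt t + algebraMap ℝ H θ₂)) ^ 3 * q)‖
        ≤ β_F * (2 * C₁ ^ 3) * ‖q‖ :=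
  stmt9_general β_F θ₂ C₁ r T hβF wt₀ hC₁ wt hball β_p θ₁
end
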